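/- Let D ⊂ ℝ^d be compact and A : D → ℝ^{m×n} continuous. Define f(t, Y) = ‖(I − P_{A(t)Y}) A(t)‖_F² for Y ∈ ℝ^{n×(r+p)}, where P_{A(t)Y} is the orthogonal projection onto the range of A(t)Y. Then f is measurable with respect to the product σ-algebra B(D) ⊗ B(ℝ^{n×(r+p)}). -/

import Mathlib

open MeasureTheory ProbabilityTheory Real Matrix Filter
open Topology

/-- Frobenius norm of a real matrix. -/
noncomputable def frob {m n : Type*} [Fintype m] [Fintype n]
    (M : Matrix m n ℝ) : ℝ :=
  Real.sqrt (∑ i, ∑ j, (M i j) ^ 2)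

/-- The four Penrose conditions characterizing the Moore–Penrose pseudoinverse. -/
def IsMoorePenrose {m n : Type*} [Fintype m] [Fintype n]
    (M : Matrix m n ℝ) (Md : Matrix n m ℝ) : Prop :=
  M * Md * M = M ∧ Md * M * Md = Md ∧ (M * Md)ᵀ = M * Md ∧ (Md * M)ᵀ = Md * M

/-- The Moore–Penrose pseudoinverse of a real matrix (it exists and is unique). -/
noncomputable def pinv {m n : Type*} [Fintype m] [Fintype n]
    (M : Matrix m n ℝ) : Matrix n m ℝ :=
  open scoped Classical in
  if h : ∃ Md, IsMoorePenrose M Md then h.choose else 0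

instance matrixMeasurableSpace {m n : Type*} : MeasurableSpace (Matrix m n ℝ) :=
  (inferInstance : MeasurableSpace (m → n → ℝ))


noncomputable def pinvd (x : ℝ) : ℝ := if x = 0 then 0 else x⁻¹

lemma mp_unique {m n : Type*} [Fintype m] [Fintype n]
    {M : Matrix m n ℝ} {X Y : Matrix n m ℝ}
    (hX : IsMoorePenrose M X) (hY : IsMoorePenrose M Y) : X = Y := by
  obtain ⟨hX1, hX2, hX3, hX4⟩ := hX
  obtain ⟨hY1, hY2, hY3, hY4⟩ := hY
  have h6 : Mᵀ = Mᵀ * M * Y := by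
    conv_lhs => rw [← hY1]
    rw [Matrix.transpose_mul, hY3, ← Matrix.mul_assoc]
  have h5 : Mᵀ = X * M * Mᵀ := by
    conv_lhs => rw [← hX1]
    rw [Matrix.mul_assoc, Matrix.transpose_mul, hX4]
  have key : X = X * M * Y := by
    calc X = X * M * X := hX2.symm
    _ = X * (M * X)ᵀ := by rw [hX3, Matrix.mul_assoc]
    _ = X * (Xᵀ * Mᵀ) := by rw [Matrix.transpose_mul]
    _ = X * (Xᵀ * (Mᵀ * M * Y)) := by rw [← h6]
    _ = X * (M * X)ᵀ * M * Y := by simp only [Matrix.transpose_mul, Matrix.mul_assoc]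
    _ = X * (M * X) * M * Y := by rw [hX3]
    _ = X * M * Y := by rw [← Matrix.mul_assoc X M X, hX2]
  have key2 : Y = X * M * Y := by
    calc Y = Y * M * Y := hY2.symm
    _ = (Y * M)ᵀ * Y := by rw [hY4]
    _ = Mᵀ * Yᵀ * Y := by rw [Matrix.transpose_mul]
    _ = X * M * Mᵀ * Yᵀ * Y := by conv_lhs => rw [h5]
    _ = X * M * ((Y * M)ᵀ * Y) := by simp only [Matrix.transpose_mul, Matrix.mul_assoc]
    _ = X * M * (Y * M * Y) := by rw [hY4]
    _ = X * M * Y := by rw [hY2]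
  rw [key, ← key2]


lemma key_construction (B : Matrix (Fin m) (Fin n) ℝ) :
    ∃ V : Matrix (Fin n) (Fin n) ℝ, ∃ ev : Fin n → ℝ,
      V * Vᵀ = 1 ∧ Vᵀ * V = 1 ∧ (∀ i, 0 ≤ ev i) ∧
      Bᵀ * B = V * diagonal ev * Vᵀ := by
  set G := Bᵀ * B with hGdef
  have hH : G.IsHermitian := by
    have h := isHermitian_conjTranspose_mul_self B
    rwa [conjTranspose_eq_transpose_of_trivial] at h
  have hPSD : G.PosSemidef := by
    have h := posSemidef_conjTranspose_mul_self B
    rwa [conjTranspose_eq_transpose_of_trivial] at h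
  refine ⟨(hH.eigenvectorUnitary : Matrix (Fin n) (Fin n) ℝ), hH.eigenvalues, ?_, ?_, hPSD.eigenvalues_nonneg, ?_⟩
  · have := (Matrix.mem_unitaryGroup_iff).mp hH.eigenvectorUnitary.2
    rwa [star_eq_conjTranspose, conjTranspose_eq_transpose_of_trivial] at this
  · have := (Matrix.mem_unitaryGroup_iff').mp hH.eigenvectorUnitary.2
    rwa [star_eq_conjTranspose, conjTranspose_eq_transpose_of_trivial] at this
  · have h := hH.spectral_theorem
    rwa [Unitary.conjStarAlgAut_apply, star_eq_conjTranspose, conjTranspose_eq_transpose_of_trivial,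
      show (RCLike.ofReal ∘ hH.eigenvalues : Fin n → ℝ) = hH.eigenvalues from funext fun i => rfl] at h



lemma pinv_main {m n : ℕ} (B : Matrix (Fin m) (Fin n) ℝ) :
    Tendsto (fun k : ℕ => B * (Bᵀ * B + ((k : ℝ) + 1)⁻¹ • 1)⁻¹ * Bᵀ) atTop
      (𝓝 (B * pinv B)) := by
  obtain ⟨V, ev, hV1, hV2, hnn, hspec⟩ := key_construction B
  set G := Bᵀ * B with hGdef
  have sandwich : ∀ f g : Fin n → ℝ,
      (V * diagonal f * Vᵀ) * (V * diagonal g * Vᵀ)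
        = V * diagonal (fun i => f i * g i) * Vᵀ := by
    intro f g
    have h1 : (V * diagonal f * Vᵀ) * (V * diagonal g * Vᵀ)
        = V * (diagonal f * ((Vᵀ * V) * (diagonal g * Vᵀ))) := by
      simp only [Matrix.mul_assoc]
    rw [h1, hV2, Matrix.one_mul, ← Matrix.diagonal_mul_diagonal, Matrix.mul_assoc,
      Matrix.mul_assoc]
  have tform : ∀ f : Fin n → ℝ, (V * diagonal f * Vᵀ)ᵀ = V * diagonal f * Vᵀ := by
    intro f
    rw [Matrix.transpose_mul, Matrix.transpose_mul, Matrix.transpose_transpose,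
      Matrix.diagonal_transpose, Matrix.mul_assoc]
  have dcong : ∀ {f g : Fin n → ℝ}, (∀ i, f i = g i) →
      V * diagonal f * Vᵀ = V * diagonal g * Vᵀ := by
    intro f g h; rw [funext h]
  set pd : Fin n → ℝ := fun i => pinvd (ev i) with hpddef
  set Gp := V * diagonal pd * Vᵀ with hGp
  have hGpG : Gp * G = V * diagonal (fun i => pd i * ev i) * Vᵀ := by
    rw [hGp, hspec, sandwich]
  have hGGp : G * Gp = V * diagonal (fun i => ev i * pd i) * Vᵀ := by
    rw [hGp, hspec, sandwich]
  have hcomm : Gp * G = G * Gp := by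
    rw [hGpG, hGGp]; exact dcong fun i => mul_comm _ _
  have hGt : Gᵀ = G := by rw [hspec, tform]
  have hGpt : Gpᵀ = Gp := by rw [hGp, tform]
  have hpd0 : ∀ i, ev i = 0 → pd i = 0 := fun i h => by simp [hpddef, pinvd, h]
  have hpd1 : ∀ i, ev i ≠ 0 → pd i = (ev i)⁻¹ := fun i h => by simp [hpddef, pinvd, h]
  -- (Gp*G)*G = G, and Gp*(G*Gp) type facts
  have hPG2 : Gp * G * G = G := by
    calc Gp * G * G = (V * diagonal (fun i => pd i * ev i) * Vᵀ) * (V * diagonal ev * Vᵀ) := by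
          rw [hGpG, hspec]
    _ = V * diagonal (fun i => pd i * ev i * ev i) * Vᵀ := sandwich _ _
    _ = V * diagonal ev * Vᵀ := by
          refine dcong fun i => ?_
          by_cases h : ev i = 0
          · simp [h, hpd0 i h]
          · rw [hpd1 i h]; field_simp
    _ = G := hspec.symm
  have hGPGp : Gp * G * Gp = Gp := by
    calc Gp * G * Gp = (V * diagonal (fun i => pd i * ev i) * Vᵀ) * (V * diagonal pd * Vᵀ) := by
          rw [hGpG, hGp]
    _ = V * diagonal (fun i => pd i * ev i * pd i) * Vᵀ := sandwich _ _
    _ = V * diagonal pd * Vᵀ := by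
          refine dcong fun i => ?_
          by_cases h : ev i = 0
          · simp [hpd0 i h]
          · rw [hpd1 i h]; field_simp
    _ = Gp := hGp.symm
  -- B * (Gp * G) = B
  have hPt : (Gp * G)ᵀ = Gp * G := by rw [hGpG]; exact tform _
  have e1 : Bᵀ * (B * (Gp * G)) = G := by
    rw [← Matrix.mul_assoc, ← hGdef, ← Matrix.mul_assoc, ← hcomm, hPG2]
  have e2 : (Gp * G) * (Bᵀ * B) = G := by rw [← hGdef, hPG2]
  have e3 : (Gp * G) * (Bᵀ * (B * (Gp * G))) = G := by rw [e1, hPG2]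
  have hz : (B - B * (Gp * G))ᵀ * (B - B * (Gp * G)) = 0 := by
    rw [Matrix.transpose_sub, Matrix.transpose_mul, hPt, Matrix.sub_mul, Matrix.mul_sub,
      Matrix.mul_sub, Matrix.mul_assoc (Gp * G) Bᵀ B, Matrix.mul_assoc (Gp * G) Bᵀ (B * (Gp * G)),
      e1, e2, ← hGdef]
    simp
  have hBP : B * (Gp * G) = B := by
    have h0 : B - B * (Gp * G) = 0 := by
      apply Matrix.conjTranspose_mul_self_eq_zero.mp
      rw [conjTranspose_eq_transpose_of_trivial]; exact hz
    exact (sub_eq_zero.mp h0).symm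
  -- Penrose conditions
  have hMP : IsMoorePenrose B (Gp * Bᵀ) := by
    refine ⟨?_, ?_, ?_, ?_⟩
    · rw [Matrix.mul_assoc B (Gp * Bᵀ) B, Matrix.mul_assoc Gp Bᵀ B, ← hGdef]
      exact hBP
    · rw [Matrix.mul_assoc Gp Bᵀ B, ← hGdef, ← Matrix.mul_assoc (Gp * G) Gp Bᵀ, hGPGp]
    · simp only [Matrix.transpose_mul, Matrix.transpose_transpose, hGpt, Matrix.mul_assoc]
    · rw [Matrix.mul_assoc, ← hGdef]
      exact hPt
  have hex : ∃ Md, IsMoorePenrose B Md := ⟨Gp * Bᵀ, hMP⟩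
  have hpinv : pinv B = Gp * Bᵀ := by
    unfold pinv
    rw [dif_pos hex]
    exact mp_unique hex.choose_spec hMP
  -- the C matrix
  set C := B * V with hC
  have hCform : ∀ f : Fin n → ℝ, B * (V * diagonal f * Vᵀ) * Bᵀ = C * diagonal f * Cᵀ := by
    intro f
    rw [hC]
    simp only [Matrix.transpose_mul, Matrix.mul_assoc]
  have hBpinvB : B * pinv B = C * diagonal pd * Cᵀ := by
    rw [hpinv, ← Matrix.mul_assoc, Matrix.mul_assoc B Gp Bᵀ, hGp, ← Matrix.mul_assoc]
    exact hCform pd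
  have hCtC : Cᵀ * C = diagonal ev := by
    rw [hC, Matrix.transpose_mul]
    calc Vᵀ * Bᵀ * (B * V) = Vᵀ * ((Bᵀ * B) * V) := by simp only [Matrix.mul_assoc]
    _ = Vᵀ * (V * diagonal ev * (Vᵀ * V)) := by
          rw [← hGdef, hspec]; simp only [Matrix.mul_assoc]
    _ = Vᵀ * (V * diagonal ev) := by rw [hV2, Matrix.mul_one]
    _ = (Vᵀ * V) * diagonal ev := by rw [Matrix.mul_assoc]
    _ = diagonal ev := by rw [hV2, Matrix.one_mul]
  have hCzero : ∀ x, ev x = 0 → ∀ i, C i x = 0 := by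
    intro x hx i
    have hsum : ∑ y, C y x * C y x = 0 := by
      have h := congrArg (fun M : Matrix (Fin n) (Fin n) ℝ => M x x) hCtC
      simpa [Matrix.mul_apply, Matrix.transpose_apply, hx] using h
    have h2 := (Finset.sum_eq_zero_iff_of_nonneg
      (fun y _ => mul_self_nonneg (C y x))).mp hsum i (Finset.mem_univ i)
    exact mul_self_eq_zero.mp h2
  -- inverse formula
  have hinv : ∀ ε : ℝ, 0 < ε →
      (G + ε • 1)⁻¹ = V * diagonal (fun i => (ev i + ε)⁻¹) * Vᵀ := by
    intro ε hε
    apply Matrix.inv_eq_right_inv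
    have h1 : V * diagonal (fun _ : Fin n => ε) * Vᵀ = ε • (1 : Matrix (Fin n) (Fin n) ℝ) := by
      rw [← Matrix.smul_one_eq_diagonal, Matrix.mul_smul, Matrix.mul_one, Matrix.smul_mul, hV1]
    have hadd : G + ε • (1 : Matrix (Fin n) (Fin n) ℝ)
        = V * diagonal (fun i => ev i + ε) * Vᵀ := by
      rw [hspec, ← h1, ← Matrix.add_mul, ← Matrix.mul_add, ← Matrix.diagonal_add]
    rw [hadd, sandwich]
    have h2 : (fun i => (ev i + ε) * (ev i + ε)⁻¹) = fun _ : Fin n => (1 : ℝ) :=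
      funext fun i => mul_inv_cancel₀ (ne_of_gt (add_pos_of_nonneg_of_pos (hnn i) hε))
    rw [h2, Matrix.diagonal_one, Matrix.mul_one, hV1]
  -- final tendsto
  rw [hBpinvB]
  have heq : ∀ k : ℕ, B * (G + ((k : ℝ) + 1)⁻¹ • 1)⁻¹ * Bᵀ
      = C * diagonal (fun i => (ev i + ((k : ℝ) + 1)⁻¹)⁻¹) * Cᵀ := by
    intro k
    rw [hinv _ (by positivity)]
    exact hCform _
  have entry : ∀ (f : Fin n → ℝ) i j, (C * diagonal f * Cᵀ) i j = ∑ x, C i x * f x * C j x := by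
    intro f i j
    rw [Matrix.mul_apply]
    exact Finset.sum_congr rfl fun x _ => by rw [Matrix.mul_diagonal, Matrix.transpose_apply]
  have hT : Tendsto (fun k : ℕ => C * diagonal (fun i => (ev i + ((k : ℝ) + 1)⁻¹)⁻¹) * Cᵀ)
      atTop (𝓝 (C * diagonal pd * Cᵀ)) := by
    apply tendsto_pi_nhds.mpr; intro i
    apply tendsto_pi_nhds.mpr; intro j
    simp only [entry]
    apply tendsto_finset_sum
    intro x _
    by_cases hx : ev x = 0
    · simp only [hCzero x hx i, zero_mul]
      exact tendsto_const_nhds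
    · have h1 : Tendsto (fun k : ℕ => ev x + ((k : ℝ) + 1)⁻¹) atTop (𝓝 (ev x)) := by
        have h0 := tendsto_one_div_add_atTop_nhds_zero_nat (𝕜 := ℝ)
        simpa [one_div] using tendsto_const_nhds.add h0
      have h2 : Tendsto (fun k : ℕ => (ev x + ((k : ℝ) + 1)⁻¹)⁻¹) atTop (𝓝 (ev x)⁻¹) :=
        h1.inv₀ hx
      rw [hpd1 x hx]
      exact (tendsto_const_nhds.mul h2).mul tendsto_const_nhds
  exact hT.congr fun k => (heq k).symm


instance matrixBorelSpace {m n : Type*} [Countable m] [Countable n] :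
    BorelSpace (Matrix m n ℝ) :=
  Pi.borelSpace

lemma measurable_matrix_entry {m n : Type*} (i : m) (j : n) :
    Measurable fun M : Matrix m n ℝ => M i j :=
  (measurable_pi_apply j).comp (measurable_pi_apply i)

lemma measurable_matrix_mk {X m n : Type*} [MeasurableSpace X]
    {f : X → Matrix m n ℝ} (h : ∀ i j, Measurable fun x => f x i j) : Measurable f :=
  measurable_pi_lambda _ fun i => measurable_pi_lambda _ fun j => h i j

lemma Measurable.mmul {X a b c : Type*} [MeasurableSpace X] [Fintype b]
    {f : X → Matrix a b ℝ} {g : X → Matrix b c ℝ}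
    (hf : Measurable f) (hg : Measurable g) : Measurable fun x => f x * g x :=
  measurable_matrix_mk fun i j => by
    simp only [Matrix.mul_apply]
    exact Finset.measurable_sum _ fun k _ =>
      ((measurable_matrix_entry i k).comp hf).mul ((measurable_matrix_entry k j).comp hg)

lemma measurable_matrix_inv {k : ℕ} :
    Measurable fun M : Matrix (Fin k) (Fin k) ℝ => M⁻¹ := by
  have h : (fun M : Matrix (Fin k) (Fin k) ℝ => M⁻¹)
      = fun M => (M.det)⁻¹ • M.adjugate := by
    funext M
    rw [Matrix.inv_def, Ring.inverse_eq_inv]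
  rw [h]
  apply measurable_matrix_mk
  intro i j
  simp only [Matrix.smul_apply, smul_eq_mul]
  exact ((continuous_id.matrix_det).measurable.inv).mul
    (((continuous_id.matrix_adjugate).matrix_elem i j).measurable)


/-- Measurability of the parameter-dependent HMT error
`f(t,Y) = ‖(I − P_{A(t)Y})A(t)‖_F²` on `D × ℝ^{n×(r+p)}` with respect to the
product (Borel) σ-algebra, for compact `D ⊂ ℝ^d` and continuous `A`. -/
theorem hmt_error_measurable {d m n r p : ℕ}
    (D : Set (Fin d → ℝ)) (hD : IsCompact D)
    (A : (Fin d → ℝ) → Matrix (Fin m) (Fin n) ℝ) (hA : ContinuousOn A D) :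
    Measurable (fun q : D × Matrix (Fin n) (Fin (r + p)) ℝ =>
      frob ((1 - (A q.1 * q.2) * pinv (A q.1 * q.2)) * A q.1) ^ 2) := by
  have hAm : Measurable fun q : D × Matrix (Fin n) (Fin (r + p)) ℝ => A q.1 :=
    ((hA.restrict).comp continuous_fst).measurable
  have hYm : Measurable fun q : D × Matrix (Fin n) (Fin (r + p)) ℝ => q.2 := measurable_snd
  have hBm : Measurable fun q : D × Matrix (Fin n) (Fin (r + p)) ℝ => A q.1 * q.2 :=
    hAm.mmul hYm
  have hBtm : Measurable fun q : D × Matrix (Fin n) (Fin (r + p)) ℝ => (A q.1 * q.2)ᵀ :=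
    measurable_matrix_mk fun i j => (measurable_matrix_entry j i).comp hBm
  apply measurable_of_tendsto_metrizable
    (f := fun (k : ℕ) q => frob ((1 - (A q.1 * q.2) *
      ((A q.1 * q.2)ᵀ * (A q.1 * q.2) + ((k : ℝ) + 1)⁻¹ • 1)⁻¹ * (A q.1 * q.2)ᵀ) * A q.1) ^ 2)
  · intro k
    have hGm : Measurable fun q : D × Matrix (Fin n) (Fin (r + p)) ℝ =>
        (A q.1 * q.2)ᵀ * (A q.1 * q.2) + ((k : ℝ) + 1)⁻¹ • 1 :=
      measurable_matrix_mk fun i j => by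
        simp only [Matrix.add_apply]
        exact ((measurable_matrix_entry i j).comp (hBtm.mmul hBm)).add measurable_const
    have hInvm := measurable_matrix_inv.comp hGm
    have hMk := (hBm.mmul hInvm).mmul hBtm
    have hSub : Measurable fun q : D × Matrix (Fin n) (Fin (r + p)) ℝ =>
        (1 - (A q.1 * q.2) * ((A q.1 * q.2)ᵀ * (A q.1 * q.2) + ((k : ℝ) + 1)⁻¹ • 1)⁻¹ *
          (A q.1 * q.2)ᵀ) * A q.1 := by
      refine (measurable_matrix_mk fun i j => ?_).mmul hAm
      simp only [Matrix.sub_apply]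
      exact measurable_const.sub ((measurable_matrix_entry i j).comp hMk)
    simp only [frob]
    apply Measurable.pow_const
    apply Real.continuous_sqrt.measurable.comp
    apply Finset.measurable_sum
    intro i _
    apply Finset.measurable_sum
    intro j _
    exact ((measurable_matrix_entry i j).comp hSub).pow_const 2
  · rw [tendsto_pi_nhds]
    intro q
    have h := pinv_main (A q.1 * q.2)
    have hcont : Continuous fun M : Matrix (Fin m) (Fin m) ℝ =>
        frob ((1 - M) * A q.1) ^ 2 := by
      apply Continuous.pow
      apply Real.continuous_sqrt.comp
      apply continuous_finset_sum
      intro i _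
      apply continuous_finset_sum
      intro j _
      exact (((continuous_const.sub continuous_id).matrix_mul continuous_const).matrix_elem
        i j).pow 2
    exact (hcont.tendsto _).comp h
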